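/- Let (A, \mu, \alpha) be a multiplicative Hom-associative algebra, t_n the signed cyclic operator on A^{\otimes n+1}, N = Id + t_n + ... + t_n^n, b the Hom-Hochschild boundary and b' its truncation (without the last face). Then b' N = N b. -/

import Mathlib

/-!
Write `d_i` for the signed faces, so that `b = ∑_{i ≤ n+1} d_i` and `b' = ∑_{i ≤ n} d_i`.
Rotating the tensor factors moves the pair contracted by `d_i` one place to the right, so
`d_{i+1} t = t d_i`, hence `d_i tⁱ = tⁱ d_0`. As `t^{m+1} = 1` on `A^{⊗(m+1)}`, we get
`t N = N t = N`, so `d_i N = tⁱ d_0 N` and `N d_i = N d_0 t^{n+2-i}`. Summing over `i` gives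
`b' N = N d_0 N = N b`.
-/

/-- The space of Hochschild chains of degree `n` of `A` (the free vector space on the
elementary tensors of `A^{⊗(n+1)}`). -/
abbrev HChain (k A : Type*) [Semiring k] (n : ℕ) := (Fin (n + 1) → A) →₀ k

/-- The cyclic permutation `(a_0, …, a_n) ↦ (a_n, a_0, …, a_{n-1})`. -/
def cycTuple {A : Type*} (n : ℕ) (a : Fin (n + 1) → A) : Fin (n + 1) → A :=
  fun j => a (j - 1)

/-- The `i`-th Hochschild face `A^{⊗(n+2)} → A^{⊗(n+1)}` on elementary tensors, twisted
by `γ` and with product `m`. -/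
def cFace {A : Type*} (γ : A → A) (m : A → A → A) (n : ℕ) (i : Fin (n + 2))
    (a : Fin (n + 2) → A) : Fin (n + 1) → A :=
  if (i : ℕ) = n + 1 then
    fun j => if (j : ℕ) = 0 then m (a (Fin.last (n + 1))) (a 0) else γ (a j.castSucc)
  else fun j =>
    if (j : ℕ) < (i : ℕ) then γ (a j.castSucc)
    else if (j : ℕ) = (i : ℕ) then m (a j.castSucc) (a j.succ)
    else γ (a j.succ)

open Finset

namespace LinearMap

variable {R M₁ M₂ M₃ ι : Type*} [Semiring R] [AddCommMonoid M₁] [AddCommMonoid M₂]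
  [AddCommMonoid M₃] [Module R M₁] [Module R M₂] [Module R M₃]

theorem finsetSum_comp (s : Finset ι) (g : ι → M₂ →ₗ[R] M₃) (f : M₁ →ₗ[R] M₂) :
    (∑ i ∈ s, g i) ∘ₗ f = ∑ i ∈ s, g i ∘ₗ f := by
  ext; simp

theorem comp_finsetSum (s : Finset ι) (g : M₂ →ₗ[R] M₃) (f : ι → M₁ →ₗ[R] M₂) :
    g ∘ₗ (∑ i ∈ s, f i) = ∑ i ∈ s, g ∘ₗ f i := by
  ext; simp

end LinearMap

section GeomSum

variable {S : Type*} [Ring S] {x : S} {m : ℕ}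

theorem mul_geom_sum_of_pow_eq_one (hx : x ^ m = 1) :
    x * ∑ i ∈ range m, x ^ i = ∑ i ∈ range m, x ^ i := by
  have h := mul_geom_sum x m
  rwa [hx, sub_self, sub_mul, one_mul, sub_eq_zero] at h

theorem geom_sum_mul_of_pow_eq_one (hx : x ^ m = 1) :
    (∑ i ∈ range m, x ^ i) * x = ∑ i ∈ range m, x ^ i := by
  have h := geom_sum_mul x m
  rwa [hx, sub_self, mul_sub, mul_one, sub_eq_zero] at h

theorem pow_mul_geom_sum_of_pow_eq_one (hx : x ^ m = 1) (j : ℕ) :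
    x ^ j * ∑ i ∈ range m, x ^ i = ∑ i ∈ range m, x ^ i := by
  induction j with
  | zero => rw [pow_zero, one_mul]
  | succ j ih => rw [pow_succ, mul_assoc, mul_geom_sum_of_pow_eq_one hx, ih]

theorem geom_sum_mul_pow_of_pow_eq_one (hx : x ^ m = 1) (j : ℕ) :
    (∑ i ∈ range m, x ^ i) * x ^ j = ∑ i ∈ range m, x ^ i := by
  induction j with
  | zero => rw [pow_zero, mul_one]
  | succ j ih => rw [pow_succ, ← mul_assoc, ih, geom_sum_mul_of_pow_eq_one hx]

theorem sum_range_pow_sub_of_pow_eq_one (hx : x ^ m = 1) :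
    ∑ i ∈ range m, x ^ (m - i) = ∑ i ∈ range m, x ^ i := by
  calc ∑ i ∈ range m, x ^ (m - i) = ∑ i ∈ range m, x ^ (m - 1 - i + 1) :=
        sum_congr rfl fun i hi => by rw [mem_range] at hi; congr 1; omega
    _ = ∑ i ∈ range m, x ^ (i + 1) := sum_range_reflect (fun i => x ^ (i + 1)) m
    _ = x * ∑ i ∈ range m, x ^ i := by simp_rw [pow_succ', mul_sum]
    _ = ∑ i ∈ range m, x ^ i := mul_geom_sum_of_pow_eq_one hx

end GeomSum

section CyclicNorm

open LinearMap

variable {R M M' : Type*} [Semiring R] [AddCommGroup M] [AddCommGroup M'] [Module R M]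
  [Module R M'] {n : ℕ} {t : Module.End R M} {s : Module.End R M'} {d : Fin (n + 2) → M →ₗ[R] M'}

theorem face_comp_pow_eq_pow_comp_face_zero
    (hd : ∀ i : Fin (n + 1), d i.succ ∘ₗ t = s ∘ₗ d i.castSucc) (i : Fin (n + 2)) :
    d i ∘ₗ (t ^ (i : ℕ)) = (s ^ (i : ℕ)) ∘ₗ d 0 := by
  induction i using Fin.induction with
  | zero => simp only [Fin.val_zero, pow_zero, Module.End.one_eq_id, comp_id, id_comp]
  | succ i ih =>
    rw [Fin.val_succ, pow_succ', pow_succ', Module.End.mul_eq_comp, Module.End.mul_eq_comp,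
      ← comp_assoc, hd, comp_assoc, ← Fin.val_castSucc, ih, comp_assoc]

theorem face_comp_norm (ht : t ^ (n + 2) = 1)
    (hd : ∀ i : Fin (n + 1), d i.succ ∘ₗ t = s ∘ₗ d i.castSucc) (i : Fin (n + 2)) :
    d i ∘ₗ (∑ j ∈ range (n + 2), t ^ j) = (s ^ (i : ℕ)) ∘ₗ d 0 ∘ₗ ∑ j ∈ range (n + 2), t ^ j := by
  calc d i ∘ₗ (∑ j ∈ range (n + 2), t ^ j)
      = d i ∘ₗ (t ^ (i : ℕ) * ∑ j ∈ range (n + 2), t ^ j) := by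
        rw [pow_mul_geom_sum_of_pow_eq_one ht]
    _ = (s ^ (i : ℕ)) ∘ₗ d 0 ∘ₗ ∑ j ∈ range (n + 2), t ^ j := by
        rw [Module.End.mul_eq_comp, ← comp_assoc, face_comp_pow_eq_pow_comp_face_zero hd,
          comp_assoc]

theorem norm_comp_face (ht : t ^ (n + 2) = 1) (hs : s ^ (n + 1) = 1)
    (hd : ∀ i : Fin (n + 1), d i.succ ∘ₗ t = s ∘ₗ d i.castSucc) (i : Fin (n + 2)) :
    (∑ j ∈ range (n + 1), s ^ j) ∘ₗ d i
      = (∑ j ∈ range (n + 1), s ^ j) ∘ₗ d 0 ∘ₗ (t ^ (n + 2 - i)) := by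
  have hti : (t ^ (i : ℕ)) ∘ₗ (t ^ (n + 2 - i)) = LinearMap.id := by
    rw [← Module.End.mul_eq_comp, ← pow_add, Nat.add_sub_cancel' i.isLt.le, ht,
      Module.End.one_eq_id]
  calc (∑ j ∈ range (n + 1), s ^ j) ∘ₗ d i
      = (∑ j ∈ range (n + 1), s ^ j) ∘ₗ (d i ∘ₗ (t ^ (i : ℕ))) ∘ₗ (t ^ (n + 2 - i)) := by
        rw [comp_assoc, hti, comp_id]
    _ = ((∑ j ∈ range (n + 1), s ^ j) * s ^ (i : ℕ)) ∘ₗ d 0 ∘ₗ (t ^ (n + 2 - i)) := by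
        rw [face_comp_pow_eq_pow_comp_face_zero hd, Module.End.mul_eq_comp, comp_assoc,
          comp_assoc]
    _ = (∑ j ∈ range (n + 1), s ^ j) ∘ₗ d 0 ∘ₗ (t ^ (n + 2 - i)) := by
        rw [geom_sum_mul_pow_of_pow_eq_one hs]

theorem truncated_comp_norm_eq_norm_comp (ht : t ^ (n + 2) = 1) (hs : s ^ (n + 1) = 1)
    (hd : ∀ i : Fin (n + 1), d i.succ ∘ₗ t = s ∘ₗ d i.castSucc) :
    (∑ i : Fin (n + 1), d i.castSucc) ∘ₗ (∑ j ∈ range (n + 2), t ^ j)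
      = (∑ j ∈ range (n + 1), s ^ j) ∘ₗ ∑ i, d i := by
  calc (∑ i : Fin (n + 1), d i.castSucc) ∘ₗ (∑ j ∈ range (n + 2), t ^ j)
      = (∑ i : Fin (n + 1), s ^ (i : ℕ)) ∘ₗ d 0 ∘ₗ ∑ j ∈ range (n + 2), t ^ j := by
        rw [finsetSum_comp, finsetSum_comp]
        exact sum_congr rfl fun i _ => by rw [face_comp_norm ht hd, Fin.val_castSucc]
    _ = (∑ j ∈ range (n + 1), s ^ j) ∘ₗ d 0 ∘ₗ ∑ i : Fin (n + 2), t ^ (n + 2 - i) := by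
        rw [Fin.sum_univ_eq_sum_range (fun i => s ^ i), Fin.sum_univ_eq_sum_range
          (fun i => t ^ (n + 2 - i)), sum_range_pow_sub_of_pow_eq_one ht]
    _ = (∑ j ∈ range (n + 1), s ^ j) ∘ₗ ∑ i, d i := by
        rw [comp_finsetSum, comp_finsetSum, comp_finsetSum]
        exact sum_congr rfl fun i _ => (norm_comp_face ht hs hd i).symm

end CyclicNorm

theorem cFace_succ_cycTuple {A : Type*} (γ : A → A) (μ : A → A → A) (n : ℕ) (i : Fin (n + 1))
    (a : Fin (n + 2) → A) :
    cFace γ μ n i.succ (cycTuple (n + 1) a) = cycTuple n (cFace γ μ n i.castSucc a) := by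
  have succ_sub_one {m : ℕ} (j : Fin m) : j.succ - 1 = j.castSucc := by
    ext; simp [Fin.coe_sub_one]
  have zero_sub_one {m : ℕ} : (0 : Fin (m + 1)) - 1 = Fin.last m := by ext; simp
  have last_sub_one {m : ℕ} : Fin.last (m + 1) - 1 = (Fin.last m).castSucc := by
    ext; simp [Fin.coe_sub_one]
  have hi := i.isLt
  funext j
  cases j using Fin.cases <;>
  · simp only [cFace, cycTuple, Fin.val_succ, Fin.val_castSucc]
    split_ifs <;>
      simp only [succ_sub_one, zero_sub_one, last_sub_one, Fin.val_succ, Fin.val_castSucc,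
        Fin.val_zero, Fin.val_last, Fin.castSucc_zero, Fin.succ_last, ← Fin.succ_castSucc] <;>
      split_ifs <;> first | contradiction | omega | rfl

open Fin.NatCast in
theorem iterate_cycTuple {A : Type*} (m j : ℕ) (a : Fin (m + 1) → A) :
    (cycTuple m)^[j] a = fun i => a (i - j) := by
  induction j with
  | zero => simp
  | succ j ih =>
    rw [Function.iterate_succ_apply', ih]
    funext i
    simp only [cycTuple, Nat.cast_succ, sub_sub, add_comm]

theorem iterate_cycTuple_self {A : Type*} (m : ℕ) : (cycTuple (A := A) m)^[m + 1] = id := by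
  funext a
  rw [iterate_cycTuple, Fin.natCast_self]
  simp

section HochschildChains

variable (k : Type*) {A : Type*} [CommRing k]

noncomputable def cyclicOp (m : ℕ) : Module.End k (HChain k A m) :=
  Finsupp.lift (HChain k A m) k (Fin (m + 1) → A)
    fun a => ((-1 : k) ^ m) • Finsupp.single (cycTuple m a) 1

noncomputable def hochschildFace (γ : A → A) (μ : A → A → A) (n : ℕ) (i : Fin (n + 2)) :
    HChain k A (n + 1) →ₗ[k] HChain k A n :=
  Finsupp.lift (HChain k A n) k (Fin (n + 2) → A)
    fun a => ((-1 : k) ^ (i : ℕ)) • Finsupp.single (cFace γ μ n i a) 1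

theorem cyclicOp_single (m : ℕ) (a : Fin (m + 1) → A) :
    cyclicOp k m (Finsupp.single a 1) = ((-1 : k) ^ m) • Finsupp.single (cycTuple m a) 1 := by
  rw [cyclicOp, Finsupp.lift_apply, Finsupp.sum_single_index (by simp), one_smul]

theorem hochschildFace_single (γ : A → A) (μ : A → A → A) (n : ℕ) (i : Fin (n + 2))
    (a : Fin (n + 2) → A) :
    hochschildFace k γ μ n i (Finsupp.single a 1)
      = ((-1 : k) ^ (i : ℕ)) • Finsupp.single (cFace γ μ n i a) 1 := by
  rw [hochschildFace, Finsupp.lift_apply, Finsupp.sum_single_index (by simp), one_smul]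

theorem cyclicOp_pow_single (m j : ℕ) (a : Fin (m + 1) → A) :
    (cyclicOp k m ^ j) (Finsupp.single a 1)
      = ((-1 : k) ^ (m * j)) • Finsupp.single ((cycTuple m)^[j] a) 1 := by
  induction j with
  | zero => simp
  | succ j ih =>
    rw [pow_succ', Module.End.mul_apply, ih, map_smul, cyclicOp_single, smul_smul,
      Function.iterate_succ_apply', mul_add_one, pow_add, mul_comm]

theorem cyclicOp_pow_succ_self (m : ℕ) : cyclicOp k (A := A) m ^ (m + 1) = 1 := by
  ext a : 2
  rw [LinearMap.comp_apply, Finsupp.lsingle_apply, cyclicOp_pow_single,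
    (Nat.even_mul_succ_self m).neg_one_pow, one_smul, iterate_cycTuple_self]
  rfl

theorem hochschildFace_succ_comp_cyclicOp (γ : A → A) (μ : A → A → A) (n : ℕ)
    (i : Fin (n + 1)) :
    hochschildFace k γ μ n i.succ ∘ₗ cyclicOp k (n + 1)
      = cyclicOp k n ∘ₗ hochschildFace k γ μ n i.castSucc := by
  ext a : 2
  simp only [LinearMap.comp_apply, Finsupp.lsingle_apply, cyclicOp_single, map_smul,
    hochschildFace_single, cFace_succ_cycTuple, smul_smul, Fin.val_succ, Fin.val_castSucc]
  congr 1
  ring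

end HochschildChains

theorem stmt_15_general {k A : Type*} [Field k] [NonUnitalNonAssocRing A] [Module k A]
    (α : A →ₗ[k] A)
    (n : ℕ)
    (T : (m : ℕ) → Module.End k (HChain k A m))
    (hT : ∀ m : ℕ, T m = (Finsupp.lift (HChain k A m) k (Fin (m + 1) → A))
      (fun a => ((-1 : k) ^ m) • Finsupp.single (cycTuple m a) (1 : k)))
    (N : (m : ℕ) → Module.End k (HChain k A m))
    (hN : ∀ m : ℕ, N m = ∑ i ∈ Finset.range (m + 1), (T m) ^ i)
    (b : HChain k A (n + 1) →ₗ[k] HChain k A n)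
    (hb : b = (Finsupp.lift (HChain k A n) k (Fin (n + 2) → A))
      (fun a => ∑ i : Fin (n + 2), ((-1 : k) ^ (i : ℕ)) •
        Finsupp.single (cFace (⇑α) (· * ·) n i a) (1 : k)))
    (b' : HChain k A (n + 1) →ₗ[k] HChain k A n)
    (hb' : b' = (Finsupp.lift (HChain k A n) k (Fin (n + 2) → A))
      (fun a => ∑ i : Fin (n + 1), ((-1 : k) ^ (i : ℕ)) •
        Finsupp.single (cFace (⇑α) (· * ·) n i.castSucc a) (1 : k))) :
    b' ∘ₗ (N (n + 1) : HChain k A (n + 1) →ₗ[k] HChain k A (n + 1))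
      = (N n : HChain k A n →ₗ[k] HChain k A n) ∘ₗ b := by
  have hT' (m : ℕ) : T m = cyclicOp k m := hT m
  have hb_sum : b = ∑ i, hochschildFace k α (· * ·) n i := by
    rw [hb, ← Finset.sum_fn, map_sum]; rfl
  have hb'_sum : b' = ∑ i : Fin (n + 1), hochschildFace k α (· * ·) n i.castSucc := by
    rw [hb', ← Finset.sum_fn, map_sum]; rfl
  rw [hN, hN, hT', hT', hb_sum, hb'_sum]
  exact truncated_comp_norm_eq_norm_comp (cyclicOp_pow_succ_self k (n + 1))
    (cyclicOp_pow_succ_self k n) (hochschildFace_succ_comp_cyclicOp k α (· * ·) n)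

/-- For a multiplicative Hom-associative algebra `A`, with `t` the signed cyclic
operator, `N = Id + t + … + tⁿ` the norm operator, `b` the Hom-Hochschild boundary and
`b'` its truncation, one has `b' N = N b`. -/
theorem stmt_15 {k A : Type*} [Field k] [NonUnitalNonAssocRing A] [Module k A]
    [SMulCommClass k A A] [IsScalarTower k A A]
    (α : A →ₗ[k] A)
    (hassoc : ∀ a b c : A, α a * (b * c) = (a * b) * α c)
    (hmul : ∀ a b : A, α (a * b) = α a * α b)
    (n : ℕ)
    (T : (m : ℕ) → Module.End k (HChain k A m))
    (hT : ∀ m : ℕ, T m = (Finsupp.lift (HChain k A m) k (Fin (m + 1) → A))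
      (fun a => ((-1 : k) ^ m) • Finsupp.single (cycTuple m a) (1 : k)))
    (N : (m : ℕ) → Module.End k (HChain k A m))
    (hN : ∀ m : ℕ, N m = ∑ i ∈ Finset.range (m + 1), (T m) ^ i)
    (b : HChain k A (n + 1) →ₗ[k] HChain k A n)
    (hb : b = (Finsupp.lift (HChain k A n) k (Fin (n + 2) → A))
      (fun a => ∑ i : Fin (n + 2), ((-1 : k) ^ (i : ℕ)) •
        Finsupp.single (cFace (⇑α) (· * ·) n i a) (1 : k)))
    (b' : HChain k A (n + 1) →ₗ[k] HChain k A n)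
    (hb' : b' = (Finsupp.lift (HChain k A n) k (Fin (n + 2) → A))
      (fun a => ∑ i : Fin (n + 1), ((-1 : k) ^ (i : ℕ)) •
        Finsupp.single (cFace (⇑α) (· * ·) n i.castSucc a) (1 : k))) :
    b' ∘ₗ (N (n + 1) : HChain k A (n + 1) →ₗ[k] HChain k A (n + 1))
      = (N n : HChain k A n →ₗ[k] HChain k A n) ∘ₗ b :=
  stmt_15_general α n T hT N hN b hb b' hb'
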